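/- Let V be a finite-dimensional vector space over ZMod 2, let B be a symmetric bilinear form on V with B(x,x) = 0 for all x, and let q be a ℤ/2-quadratic enhancement of B. If e_1,…,e_g,f_1,…,f_g and e'_1,…,e'_g,f'_1,…,f'_g are two symplectic bases for B, then Σ_{i=1}^{g} q(e_i)·q(f_i) = Σ_{i=1}^{g} q(e'_i)·q(f'_i) in ZMod 2; that is, the Arf invariant of q is independent of the choice of symplectic basis. -/

import Mathlib

/-!
The Gauss sum `Σ_{x ∈ V} (-1)^{q(x)}` does not refer to any basis. In the coordinates of a
symplectic basis, `q(Σᵢ aᵢeᵢ + cᵢfᵢ) = Σᵢ (aᵢ q(eᵢ) + cᵢ q(fᵢ) + aᵢcᵢ)`, so the Gauss sum factors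
over the hyperbolic planes `⟨eᵢ, fᵢ⟩`, each contributing `2 · (-1)^{q(eᵢ) q(fᵢ)}`. Hence the Gauss
sum equals `2^g · (-1)^{Σᵢ q(eᵢ) q(fᵢ)}` for every symplectic basis, and this determines the sum.
-/

open Finset

def toSign (x : ZMod 2) : ℤ := if x = 0 then 1 else -1

lemma toSign_add : ∀ x y : ZMod 2, toSign (x + y) = toSign x * toSign y := by decide

lemma toSign_injective : Function.Injective toSign := by decide

lemma toSign_sum {ι : Type*} (s : Finset ι) (t : ι → ZMod 2) :
    toSign (∑ i ∈ s, t i) = ∏ i ∈ s, toSign (t i) := by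
  induction s using Finset.cons_induction with
  | empty => rfl
  | cons a s ha ih => rw [sum_cons, prod_cons, toSign_add, ih]

lemma sum_toSign_hyperbolic : ∀ u v : ZMod 2,
    ∑ p : ZMod 2 × ZMod 2, toSign (p.1 * u + p.2 * v + p.1 * p.2) = 2 * toSign (u * v) := by
  decide

section

variable {V : Type*} [AddCommGroup V] [Module (ZMod 2) V]

def IsQuadraticEnhancement (B : LinearMap.BilinForm (ZMod 2) V) (q : V → ZMod 2) : Prop :=
  ∀ x y : V, q (x + y) = q x + q y + B x y

structure IsSymplecticBasis (B : LinearMap.BilinForm (ZMod 2) V) {g : ℕ}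
    (b : Module.Basis (Fin g ⊕ Fin g) (ZMod 2) V) : Prop where
  inl_inl : ∀ i j : Fin g, B (b (Sum.inl i)) (b (Sum.inl j)) = 0
  inr_inr : ∀ i j : Fin g, B (b (Sum.inr i)) (b (Sum.inr j)) = 0
  inl_inr : ∀ i j : Fin g, B (b (Sum.inl i)) (b (Sum.inr j)) = if i = j then 1 else 0

namespace IsQuadraticEnhancement

variable {B : LinearMap.BilinForm (ZMod 2) V} {q : V → ZMod 2}

lemma polar_comm (hq : IsQuadraticEnhancement B q) (x y : V) : B x y = B y x := by
  have h := hq x y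
  rw [add_comm x, hq y x] at h
  linear_combination -h

lemma map_zero (hq : IsQuadraticEnhancement B q) : q 0 = 0 := by
  simpa using hq 0 0

lemma map_smul (hq : IsQuadraticEnhancement B q) (a : ZMod 2) (x : V) :
    q (a • x) = a * q x := by
  obtain rfl | rfl : a = 0 ∨ a = 1 := by revert a; decide
  · simpa using hq.map_zero
  · simp

lemma map_sum_of_pairwise_orthogonal (hq : IsQuadraticEnhancement B q) {ι : Type*}
    (s : Finset ι) (v : ι → V) (horth : ∀ i ∈ s, ∀ j ∈ s, i ≠ j → B (v i) (v j) = 0) :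
    q (∑ i ∈ s, v i) = ∑ i ∈ s, q (v i) := by
  induction s using Finset.cons_induction with
  | empty => simpa using hq.map_zero
  | cons a s ha ih =>
    have horth_s : ∀ i ∈ s, ∀ j ∈ s, i ≠ j → B (v i) (v j) = 0 := fun i hi j hj =>
      horth i (mem_cons_of_mem hi) j (mem_cons_of_mem hj)
    have hB : B (v a) (∑ i ∈ s, v i) = 0 := by
      rw [map_sum]
      exact sum_eq_zero fun j hj =>
        horth a (mem_cons_self a s) j (mem_cons_of_mem hj) (ne_of_mem_of_not_mem hj ha).symm
    rw [sum_cons, sum_cons, hq, ih horth_s, hB, add_zero]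

end IsQuadraticEnhancement

variable {B : LinearMap.BilinForm (ZMod 2) V} {q : V → ZMod 2} {g : ℕ}
  {b : Module.Basis (Fin g ⊕ Fin g) (ZMod 2) V}

lemma IsQuadraticEnhancement.map_sum_symplectic (hq : IsQuadraticEnhancement B q)
    (hb : IsSymplecticBasis B b) (a c : Fin g → ZMod 2) :
    q (∑ i, (a i • b (Sum.inl i) + c i • b (Sum.inr i))) =
      ∑ i, (a i * q (b (Sum.inl i)) + c i * q (b (Sum.inr i)) + a i * c i) := by
  have hfe : ∀ i j, B (b (Sum.inr i)) (b (Sum.inl j)) = if j = i then 1 else 0 := fun i j => by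
    rw [hq.polar_comm, hb.inl_inr]
  rw [hq.map_sum_of_pairwise_orthogonal]
  · refine sum_congr rfl fun i _ => ?_
    simp [hq _ _, hq.map_smul, hb.inl_inr, mul_comm (c i)]
  · intro i _ j _ hij
    simp [hb.inl_inl, hb.inr_inr, hb.inl_inr, hfe, hij, Ne.symm hij]

lemma IsQuadraticEnhancement.sum_toSign_eq [Fintype V] (hq : IsQuadraticEnhancement B q)
    (hb : IsSymplecticBasis B b) :
    ∑ x : V, toSign (q x) =
      2 ^ g * toSign (∑ i, q (b (Sum.inl i)) * q (b (Sum.inr i))) := by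
  let coords : (Fin g → ZMod 2 × ZMod 2) ≃ V :=
    ((Equiv.arrowProdEquivProdArrow _ _ _).trans (Equiv.sumArrowEquivProdArrow _ _ _).symm).trans
      b.equivFun.symm.toEquiv
  have hcoords : ∀ d, coords d = ∑ i, ((d i).1 • b (Sum.inl i) + (d i).2 • b (Sum.inr i)) := by
    intro d
    simp [coords, Module.Basis.equivFun_symm_apply, Fintype.sum_sum_type, sum_add_distrib]
  calc ∑ x : V, toSign (q x)
      = ∑ d, toSign (q (coords d)) := (coords.sum_comp _).symm
    _ = ∑ d : Fin g → ZMod 2 × ZMod 2, ∏ i, toSign ((d i).1 * q (b (Sum.inl i)) +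
          (d i).2 * q (b (Sum.inr i)) + (d i).1 * (d i).2) := by
      simp only [hcoords, hq.map_sum_symplectic hb, toSign_sum]
    _ = ∏ i, ∑ p : ZMod 2 × ZMod 2, toSign (p.1 * q (b (Sum.inl i)) +
          p.2 * q (b (Sum.inr i)) + p.1 * p.2) := by
      rw [Fintype.prod_sum]
    _ = 2 ^ g * toSign (∑ i, q (b (Sum.inl i)) * q (b (Sum.inr i))) := by
      simp only [sum_toSign_hyperbolic, prod_mul_distrib, prod_const, card_univ,
        Fintype.card_fin, toSign_sum]

end

theorem arf_invariant_well_defined_general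
    (V : Type*) [AddCommGroup V] [Module (ZMod 2) V] [FiniteDimensional (ZMod 2) V]
    (B : LinearMap.BilinForm (ZMod 2) V)
    (q : V → ZMod 2)
    (hq : ∀ x y : V, q (x + y) = q x + q y + B x y)
    (g : ℕ) (b b' : Module.Basis (Fin g ⊕ Fin g) (ZMod 2) V)
    (hee : ∀ i j : Fin g, B (b (Sum.inl i)) (b (Sum.inl j)) = 0)
    (hff : ∀ i j : Fin g, B (b (Sum.inr i)) (b (Sum.inr j)) = 0)
    (hef : ∀ i j : Fin g, B (b (Sum.inl i)) (b (Sum.inr j)) = if i = j then 1 else 0)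
    (hee' : ∀ i j : Fin g, B (b' (Sum.inl i)) (b' (Sum.inl j)) = 0)
    (hff' : ∀ i j : Fin g, B (b' (Sum.inr i)) (b' (Sum.inr j)) = 0)
    (hef' : ∀ i j : Fin g, B (b' (Sum.inl i)) (b' (Sum.inr j)) = if i = j then 1 else 0) :
    ∑ i : Fin g, q (b (Sum.inl i)) * q (b (Sum.inr i)) =
      ∑ i : Fin g, q (b' (Sum.inl i)) * q (b' (Sum.inr i)) := by
  have : Finite V := Module.finite_of_finite (ZMod 2)
  have : Fintype V := Fintype.ofFinite V
  have hq : IsQuadraticEnhancement B q := hq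
  apply toSign_injective
  apply mul_left_cancel₀ (pow_ne_zero g two_ne_zero)
  rw [← hq.sum_toSign_eq ⟨hee, hff, hef⟩, ← hq.sum_toSign_eq ⟨hee', hff', hef'⟩]

/-- The Arf invariant `Σᵢ q(eᵢ)·q(fᵢ)` of a `ℤ/2`-quadratic enhancement of an alternating
symmetric bilinear form on a `ZMod 2`-vector space does not depend on the choice of
symplectic basis. -/
theorem arf_invariant_well_defined
    (V : Type*) [AddCommGroup V] [Module (ZMod 2) V] [FiniteDimensional (ZMod 2) V]
    (B : LinearMap.BilinForm (ZMod 2) V)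
    (hsymm : ∀ x y : V, B x y = B y x)
    (halt : ∀ x : V, B x x = 0)
    (q : V → ZMod 2)
    (hq : ∀ x y : V, q (x + y) = q x + q y + B x y)
    (g : ℕ) (b b' : Module.Basis (Fin g ⊕ Fin g) (ZMod 2) V)
    (hee : ∀ i j : Fin g, B (b (Sum.inl i)) (b (Sum.inl j)) = 0)
    (hff : ∀ i j : Fin g, B (b (Sum.inr i)) (b (Sum.inr j)) = 0)
    (hef : ∀ i j : Fin g, B (b (Sum.inl i)) (b (Sum.inr j)) = if i = j then 1 else 0)
    (hee' : ∀ i j : Fin g, B (b' (Sum.inl i)) (b' (Sum.inl j)) = 0)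
    (hff' : ∀ i j : Fin g, B (b' (Sum.inr i)) (b' (Sum.inr j)) = 0)
    (hef' : ∀ i j : Fin g, B (b' (Sum.inl i)) (b' (Sum.inr j)) = if i = j then 1 else 0) :
    ∑ i : Fin g, q (b (Sum.inl i)) * q (b (Sum.inr i)) =
      ∑ i : Fin g, q (b' (Sum.inl i)) * q (b' (Sum.inr i)) :=
  arf_invariant_well_defined_general V B q hq g b b' hee hff hef hee' hff' hef'
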